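/- arXiv:2310.20165 — 2 statements merged into one kernel-verified Lean document; each statement's English description precedes it below -/
import Mathlib

section
/- Let (P_{n,i}) be a triangular array of item response functions satisfying Conditions (D) and (T), and fix 0 < α < β < 1. Then there exist constants C̃_{αβ,1} > 0 and C̃_{αβ,2} > 0, independent of (n,i), and δ₀ > 0, such that for every δ ∈ (0, δ₀), all sufficiently large n, all i ∈ {1,…,n}, and every integer k for which there exists θ_k ∈ (α,β) with Σ_{j≠i} P_{n,j}(θ_k) = k, one has (∫_{(0,δ)∪(1−δ,1)} Q_{n,i,k}(θ) dθ) / (∫₀¹ Q_{n,i,k}(θ) dθ) ≤ n·δ·exp(−n·C̃_{αβ,1}) / C̃_{αβ,2}, where Q_{n,i,k}(θ) = Σ_{S ⊆ {1,…,n}∖{i}, |S| = k} ∏_{j∈S} P_{n,j}(θ) · ∏_{j∉S, j≠i} (1 − P_{n,j}(θ)). The left-hand side equals the conditional probability that the uniform latent trait Θ lies outside (δ, 1−δ) given that exactly k of the n−1 responses other than item i equal 1. -/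
open Set Filter Topology MeasureTheory

/-- A triangular array of item response functions: for `n ≥ 1` and `1 ≤ i ≤ n`,
`P n i : (0,1) → [0,1]`. -/
def TriIRF (P : ℕ → ℕ → ℝ → ℝ) : Prop :=
  ∀ n i, 1 ≤ i → i ≤ n → ∀ θ ∈ Set.Ioo (0 : ℝ) 1, P n i θ ∈ Set.Icc (0 : ℝ) 1

/-- Condition (D): each `P n i` is continuously differentiable on `(0,1)` with derivative
`P' n i`, and for every `0 < α < β < 1` the derivatives are uniformly (in `(n,i)`)
bounded away from `0` and `∞` on `[α,β]`. -/
def CondD (P P' : ℕ → ℕ → ℝ → ℝ) : Prop :=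
  (∀ n i, 1 ≤ i → i ≤ n →
      (∀ θ ∈ Set.Ioo (0 : ℝ) 1, HasDerivAt (P n i) (P' n i θ) θ) ∧
      ContinuousOn (P' n i) (Set.Ioo (0 : ℝ) 1)) ∧
  (∀ α β : ℝ, 0 < α → α < β → β < 1 →
    ∃ m M : ℝ, 0 < m ∧ m < M ∧
      ∀ n i, 1 ≤ i → i ≤ n → ∀ θ ∈ Set.Icc α β,
        m < P' n i θ ∧ P' n i θ < M)

/-- Condition (T): `P n i` takes values in `[κ n i, γ n i]` with `0 ≤ κ n i < γ n i ≤ 1`,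
and the IRFs approach their lower/upper limits uniformly in `(n,i)` near `0` and `1`. -/
def CondT (P : ℕ → ℕ → ℝ → ℝ) (κ γ : ℕ → ℕ → ℝ) : Prop :=
  (∀ n i, 1 ≤ i → i ≤ n →
      0 ≤ κ n i ∧ κ n i < γ n i ∧ γ n i ≤ 1 ∧
      ∀ θ ∈ Set.Ioo (0 : ℝ) 1, P n i θ ∈ Set.Icc (κ n i) (γ n i)) ∧
  (∀ ε : ℝ, 0 < ε →
    ∃ l u : ℝ, l ∈ Set.Ioo (0 : ℝ) 1 ∧ u ∈ Set.Ioo (0 : ℝ) 1 ∧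
      ∀ n i, 1 ≤ i → i ≤ n →
        (∀ θ ∈ Set.Ioc (0 : ℝ) l, P n i θ - κ n i ≤ ε) ∧
        (∀ θ ∈ Set.Ico u (1 : ℝ), γ n i - P n i θ ≤ ε))

/-- `Qfun P n i k θ` : the Poisson-binomial probability that, given latent value `θ`,
exactly `k` of the `n − 1` conditionally independent Bernoulli responses with success
probabilities `P n j θ` for `j ∈ {1,…,n} \ {i}` equal `1`. -/
def Qfun (P : ℕ → ℕ → ℝ → ℝ) (n i k : ℕ) (θ : ℝ) : ℝ :=
  ∑ S ∈ ((Finset.Icc 1 n).erase i).powersetCard k,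
    (∏ j ∈ S, P n j θ) * ∏ j ∈ ((Finset.Icc 1 n).erase i) \ S, (1 - P n j θ)

/-!
Given `Θ = θ`, the number `S` of successes among the items `j ≠ i` is Poisson-binomial and
`Qfun P n i k θ = P_θ(S = k)`. By (D) and (T) there is a `c > 0` such that every IRF lies at least
`c` below its value at `θk` on `(0, δ)` and at least `c` above it on `(1 - δ, 1)`; as `S` has mean
`k` at `θk`, Chernoff bounds give `P_θ(S = k) ≤ exp(-c²(n - 1)/4)` there, which bounds the
numerator by `2δ exp(-c²(n - 1)/4)`. For the denominator, `P_θ(S > k)` rises from `≤ 1/4` to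
`≥ 3/4` across some `[a, b] ∋ θk` (Chernoff again), while by Russo's formula its derivative is
`∑ⱼ P'ⱼ P_θ(S₋ⱼ = k) ≤ (n M / c) P_θ(S = k)` (`S₋ⱼ` omits item `j`, `M` bounds `P'ⱼ`), because
removing item `j` costs at most a factor `1 - Pⱼ ≥ c`. Hence `∫ Qfun ≥ c / (2 n M)`.
-/

open Finset

namespace PoissonBinomial

/-! Independent Bernoulli trials indexed by `F` with success probabilities `p j`; an outcome is
the set `S ⊆ F` of successes. -/

def weight (p : ℕ → ℝ) (F S : Finset ℕ) : ℝ :=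
  (∏ j ∈ S, p j) * ∏ j ∈ F \ S, (1 - p j)

def expectation (p : ℕ → ℝ) (F : Finset ℕ) (g : Finset ℕ → ℝ) : ℝ :=
  ∑ S ∈ F.powerset, g S * weight p F S

open Classical in
noncomputable def prob (p : ℕ → ℝ) (F : Finset ℕ) (A : Finset ℕ → Prop) : ℝ :=
  expectation p F fun S => if A S then 1 else 0

variable {p : ℕ → ℝ} {F : Finset ℕ}

lemma weight_nonneg (hp : ∀ j ∈ F, p j ∈ Icc (0 : ℝ) 1) {S : Finset ℕ} (hS : S ⊆ F) :
    0 ≤ weight p F S :=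
  mul_nonneg (prod_nonneg fun j hj => (hp j (hS hj)).1)
    (prod_nonneg fun j hj => sub_nonneg.2 (hp j (Finset.mem_sdiff.1 hj).1).2)

lemma expectation_congr {g h : Finset ℕ → ℝ} (hgh : ∀ S ⊆ F, g S = h S) :
    expectation p F g = expectation p F h :=
  sum_congr rfl fun S hS => by rw [hgh S (mem_powerset.1 hS)]

lemma expectation_mono (hp : ∀ j ∈ F, p j ∈ Icc (0 : ℝ) 1) {g h : Finset ℕ → ℝ}
    (hgh : ∀ S ⊆ F, g S ≤ h S) : expectation p F g ≤ expectation p F h :=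
  sum_le_sum fun S hS =>
    mul_le_mul_of_nonneg_right (hgh S (mem_powerset.1 hS)) (weight_nonneg hp (mem_powerset.1 hS))

lemma expectation_nonneg (hp : ∀ j ∈ F, p j ∈ Icc (0 : ℝ) 1) {g : Finset ℕ → ℝ}
    (hg : ∀ S ⊆ F, 0 ≤ g S) : 0 ≤ expectation p F g :=
  sum_nonneg fun S hS =>
    mul_nonneg (hg S (mem_powerset.1 hS)) (weight_nonneg hp (mem_powerset.1 hS))

lemma expectation_const_mul (c : ℝ) (g : Finset ℕ → ℝ) :
    expectation p F (fun S => c * g S) = c * expectation p F g := by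
  simp only [expectation, mul_sum, mul_assoc]

lemma expectation_add (g h : Finset ℕ → ℝ) :
    expectation p F (fun S => g S + h S) = expectation p F g + expectation p F h := by
  simp only [expectation, add_mul, sum_add_distrib]

lemma expectation_sub (g h : Finset ℕ → ℝ) :
    expectation p F (fun S => g S - h S) = expectation p F g - expectation p F h := by
  simp only [expectation, sub_mul, sum_sub_distrib]

lemma expectation_prod (x : ℕ → ℝ) :
    expectation p F (fun S => ∏ j ∈ S, x j) = ∏ j ∈ F, (1 - p j + p j * x j) := by
  simp_rw [add_comm (1 - p _), prod_add, expectation, weight, prod_mul_distrib]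
  exact sum_congr rfl fun S _ => by ring

lemma expectation_one : expectation p F (fun _ => 1) = 1 := by
  simpa using expectation_prod (p := p) (F := F) fun _ => 1

lemma expectation_insert {a : ℕ} (ha : a ∉ F) (g : Finset ℕ → ℝ) :
    expectation p (insert a F) g =
      p a * expectation p F (fun T => g (insert a T)) + (1 - p a) * expectation p F g := by
  rw [expectation, sum_powerset_insert ha, add_comm, expectation, expectation, mul_sum, mul_sum]
  congr 1 <;> refine sum_congr rfl fun T hT => ?_ <;>
    have haT : a ∉ T := fun h => ha (mem_powerset.1 hT h)
  · rw [weight, weight, Finset.insert_sdiff_insert, Finset.sdiff_insert_of_notMem ha,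
      prod_insert haT]
    ring
  · rw [weight, weight, Finset.insert_sdiff_of_notMem _ haT,
      Finset.prod_insert fun h => ha (Finset.mem_sdiff.1 h).1]
    ring

lemma expectation_compl (g : Finset ℕ → ℝ) :
    expectation p F g = expectation (fun j => 1 - p j) F (fun S => g (F \ S)) := by
  refine sum_nbij' (F \ ·) (F \ ·) (fun _ _ => mem_powerset.2 sdiff_subset)
    (fun _ _ => mem_powerset.2 sdiff_subset)
    (fun S hS => Finset.sdiff_sdiff_eq_self (mem_powerset.1 hS))
    (fun S hS => Finset.sdiff_sdiff_eq_self (mem_powerset.1 hS)) fun S hS => ?_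
  simp only [weight, Finset.sdiff_sdiff_eq_self (mem_powerset.1 hS), sub_sub_cancel, mul_comm]

lemma prob_nonneg (hp : ∀ j ∈ F, p j ∈ Icc (0 : ℝ) 1) (A : Finset ℕ → Prop) :
    0 ≤ prob p F A :=
  expectation_nonneg hp fun _ _ => by split_ifs <;> norm_num

lemma prob_mono (hp : ∀ j ∈ F, p j ∈ Icc (0 : ℝ) 1) {A B : Finset ℕ → Prop}
    (hAB : ∀ S ⊆ F, A S → B S) : prob p F A ≤ prob p F B :=
  expectation_mono hp fun S hS => by
    by_cases hA : A S
    · simp [hA, hAB S hS hA]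
    · simp only [hA, if_false]
      split_ifs <;> norm_num

lemma prob_add_prob_not (A : Finset ℕ → Prop) :
    prob p F A + prob p F (fun S => ¬ A S) = 1 := by
  rw [prob, prob, ← expectation_add]
  exact (expectation_congr fun S _ => by split_ifs <;> simp_all).trans expectation_one

lemma prob_le_one (hp : ∀ j ∈ F, p j ∈ Icc (0 : ℝ) 1) (A : Finset ℕ → Prop) :
    prob p F A ≤ 1 := by
  linarith [prob_add_prob_not (p := p) (F := F) A, prob_nonneg hp fun S => ¬ A S]

lemma mul_prob_erase_le (hp : ∀ j ∈ F, p j ∈ Icc (0 : ℝ) 1) {j : ℕ} (hj : j ∈ F)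
    (A : Finset ℕ → Prop) : (1 - p j) * prob p (F.erase j) A ≤ prob p F A := by
  classical
  have hsplit := expectation_insert (p := p) (notMem_erase j F) fun S => if A S then 1 else 0
  rw [insert_erase hj] at hsplit
  rw [prob, prob, hsplit]
  refine le_add_of_nonneg_left (mul_nonneg (hp j hj).1 ?_)
  exact expectation_nonneg (fun i hi => hp i (mem_of_mem_erase hi)) fun _ _ => by
    split_ifs <;> norm_num

/-- Russo's formula. -/
theorem hasDerivAt_expectation {f : ℕ → ℝ → ℝ} {f' : ℕ → ℝ} {x : ℝ}
    (hf : ∀ j ∈ F, HasDerivAt (f j) (f' j) x) (g : Finset ℕ → ℝ) :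
    HasDerivAt (fun y => expectation (fun j => f j y) F g)
      (∑ j ∈ F, f' j * expectation (fun j => f j x) (F.erase j) fun T => g (insert j T) - g T)
      x := by
  induction F using Finset.induction_on generalizing g with
  | empty => simpa [expectation, weight] using hasDerivAt_const x (g ∅)
  | insert a F ha ih =>
    have hF : ∀ j ∈ F, HasDerivAt (f j) (f' j) x := fun j hj => hf j (mem_insert_of_mem hj)
    have ha' := hf a (mem_insert_self a F)
    simp_rw [expectation_insert ha]
    refine ((ha'.mul (ih hF fun T => g (insert a T))).add
      ((ha'.const_sub 1).mul (ih hF g))).congr_deriv ?_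
    have herase : ∀ j ∈ F, (expectation (fun j => f j x) ((insert a F).erase j)
        fun T => g (insert j T) - g T) =
        f a x * expectation (fun j => f j x) (F.erase j)
          (fun T => g (insert a (insert j T)) - g (insert a T)) +
        (1 - f a x) * expectation (fun j => f j x) (F.erase j) (fun T => g (insert j T) - g T) :=
      fun j hj => by
        rw [erase_insert_of_ne (ne_of_mem_of_not_mem hj ha).symm,
          expectation_insert (notMem_mono (erase_subset j F) ha)]
        simp only [Finset.insert_comm j a]
    rw [sum_insert ha, erase_insert ha, sum_congr rfl fun j hj => congrArg _ (herase j hj),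
      expectation_sub]
    simp only [mul_add, sum_add_distrib, mul_left_comm (f' _) (f a x),
      mul_left_comm (f' _) (1 - f a x), ← mul_sum]
    ring

theorem hasDerivAt_prob_lt_card {f : ℕ → ℝ → ℝ} {f' : ℕ → ℝ} {x : ℝ}
    (hf : ∀ j ∈ F, HasDerivAt (f j) (f' j) x) (k : ℕ) :
    HasDerivAt (fun y => prob (fun j => f j y) F fun S => k < S.card)
      (∑ j ∈ F, f' j * prob (fun j => f j x) (F.erase j) fun S => S.card = k) x := by
  refine (hasDerivAt_expectation hf _).congr_deriv (sum_congr rfl fun j _ => congrArg _ ?_)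
  refine expectation_congr fun T hT => ?_
  simp only [card_insert_of_notMem fun h => notMem_erase j F (hT h)]
  split_ifs <;> first | omega | norm_num

lemma sum_mul_prob_erase_le (hp : ∀ j ∈ F, p j ∈ Icc (0 : ℝ) 1) {p' : ℕ → ℝ} {c M : ℝ}
    (hc : 0 < c) (hM : 0 ≤ M) (hbound : ∀ j ∈ F, p' j ≤ M ∧ c ≤ 1 - p j)
    (A : Finset ℕ → Prop) :
    ∑ j ∈ F, p' j * prob p (F.erase j) A ≤ F.card * M / c * prob p F A := by
  have hterm : ∀ j ∈ F, p' j * prob p (F.erase j) A ≤ M / c * prob p F A := fun j hj => by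
    have hnn := prob_nonneg (fun i hi => hp i (mem_of_mem_erase hi)) (F := F.erase j) A
    have herase : c * prob p (F.erase j) A ≤ prob p F A :=
      (mul_le_mul_of_nonneg_right (hbound j hj).2 hnn).trans (mul_prob_erase_le hp hj A)
    calc p' j * prob p (F.erase j) A ≤ M * prob p (F.erase j) A :=
          mul_le_mul_of_nonneg_right (hbound j hj).1 hnn
      _ ≤ M / c * prob p F A := by
          rw [div_mul_eq_mul_div, le_div_iff₀ hc, mul_assoc]
          exact mul_le_mul_of_nonneg_left (by linarith) hM
  calc _ ≤ ∑ _j ∈ F, M / c * prob p F A := sum_le_sum hterm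
    _ = _ := by rw [sum_const, nsmul_eq_mul]; ring

lemma prob_card_ge_le_exp (hp : ∀ j ∈ F, p j ∈ Icc (0 : ℝ) 1) {t : ℝ} (ht : 0 ≤ t) (k : ℕ) :
    prob p F (fun S => k ≤ S.card) ≤ Real.exp ((Real.exp t - 1) * ∑ j ∈ F, p j - t * k) := by
  calc prob p F (fun S => k ≤ S.card)
      ≤ expectation p F (fun S => Real.exp (-(t * k)) * ∏ _j ∈ S, Real.exp t) :=
        expectation_mono hp fun S _ => by
          rw [prod_const, ← Real.exp_nat_mul, ← Real.exp_add]
          split_ifs with hk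
          · exact Real.one_le_exp (by nlinarith [(Nat.cast_le (α := ℝ)).2 hk])
          · exact (Real.exp_pos _).le
    _ = Real.exp (-(t * k)) * ∏ j ∈ F, (1 - p j + p j * Real.exp t) := by
        rw [expectation_const_mul, expectation_prod]
    _ ≤ Real.exp (-(t * k)) * ∏ j ∈ F, Real.exp ((Real.exp t - 1) * p j) := by
        refine mul_le_mul_of_nonneg_left (prod_le_prod (fun j hj => ?_) fun j _ => ?_)
          (Real.exp_pos _).le
        · nlinarith [(hp j hj).1, (hp j hj).2, Real.one_le_exp ht]
        · linarith [Real.add_one_le_exp ((Real.exp t - 1) * p j)]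
    _ = _ := by rw [← Real.exp_sum, ← Real.exp_add, mul_sum]; ring_nf

lemma exp_sub_one_sub_le_mul (t : ℝ) : Real.exp t - 1 - t ≤ t * (Real.exp t - 1) := by
  have h := mul_le_mul_of_nonneg_left (Real.add_one_le_exp (-t)) (Real.exp_pos t).le
  rw [mul_add, mul_one, ← Real.exp_add, add_neg_cancel, Real.exp_zero] at h
  nlinarith

theorem prob_card_ge_le_exp_of_sum_add_le (hp : ∀ j ∈ F, p j ∈ Icc (0 : ℝ) 1) {c : ℝ}
    (hc : 0 < c) {k : ℕ} (hμ : ∑ j ∈ F, p j + F.card * c ≤ k) :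
    prob p F (fun S => k ≤ S.card) ≤ Real.exp (-(c ^ 2 / 4 * F.card)) := by
  rcases le_or_gt k F.card with hk | hk
  · refine (prob_card_ge_le_exp hp (t := c / 2) (by positivity) k).trans (Real.exp_le_exp.2 ?_)
    have hX : c / 2 ≤ Real.exp (c / 2) - 1 := by linarith [Real.add_one_le_exp (c / 2)]
    have hk' : (k : ℝ) ≤ F.card := by exact_mod_cast hk
    nlinarith [mul_le_mul_of_nonneg_left hμ (show 0 ≤ Real.exp (c / 2) - 1 by linarith),
      mul_le_mul_of_nonneg_left (exp_sub_one_sub_le_mul (c / 2)) (Nat.cast_nonneg (α := ℝ) k),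
      mul_le_mul_of_nonneg_right hk' (mul_nonneg (half_pos hc).le (by linarith)),
      mul_le_mul_of_nonneg_left hX (show 0 ≤ F.card * c / 2 by positivity)]
  · have hzero : prob p F (fun S => k ≤ S.card) = expectation p F fun _ => 0 :=
      expectation_congr fun S hS => if_neg (by have := Finset.card_le_card hS; omega)
    rw [hzero]
    simpa [expectation] using (Real.exp_pos _).le

/-- The upper-tail bound applied to failures instead of successes. -/
theorem prob_card_le_le_exp_of_add_le_sum (hp : ∀ j ∈ F, p j ∈ Icc (0 : ℝ) 1) {c : ℝ}
    (hc : 0 < c) {k : ℕ} (hμ : k + F.card * c ≤ ∑ j ∈ F, p j) :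
    prob p F (fun S => S.card ≤ k) ≤ Real.exp (-(c ^ 2 / 4 * F.card)) := by
  have hsum : ∑ j ∈ F, (1 - p j) = F.card - ∑ j ∈ F, p j := by
    rw [sum_sub_distrib, sum_const, nsmul_one]
  have hq : ∀ j ∈ F, 1 - p j ∈ Icc (0 : ℝ) 1 := fun j hj =>
    ⟨sub_nonneg.2 (hp j hj).2, sub_le_self _ (hp j hj).1⟩
  have hk : k ≤ F.card := by
    have := sum_nonneg fun j hj => (hq j hj).1
    exact_mod_cast (show (k : ℝ) ≤ F.card by nlinarith [mul_nonneg (Nat.cast_nonneg F.card) hc.le])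
  refine le_of_eq_of_le ?_ (prob_card_ge_le_exp_of_sum_add_le hq hc (k := F.card - k) ?_)
  · rw [prob, expectation_compl]
    exact expectation_congr fun S hS => by
      simp only [card_sdiff_of_subset hS]
      split_ifs <;> first | omega | rfl
  · rw [hsum, Nat.cast_sub hk]
    linarith

end PoissonBinomial

section Row

open PoissonBinomial

variable {F : Finset ℕ} {f f' : ℕ → ℝ → ℝ}

lemma sum_add_card_mul_le {x y : ℕ → ℝ} {c : ℝ} (h : ∀ j ∈ F, x j + c ≤ y j) :
    ∑ j ∈ F, x j + F.card * c ≤ ∑ j ∈ F, y j := by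
  simpa [sum_add_distrib, mul_comm] using sum_le_sum h

lemma integrableOn_prob (hf01 : ∀ j ∈ F, ∀ θ ∈ Ioo (0 : ℝ) 1, f j θ ∈ Icc (0 : ℝ) 1)
    (hf : ∀ j ∈ F, ∀ θ ∈ Ioo (0 : ℝ) 1, HasDerivAt (f j) (f' j θ) θ) (A : Finset ℕ → Prop) :
    IntegrableOn (fun θ => prob (fun j => f j θ) F A) (Ioo 0 1) := by
  have hcont : ContinuousOn (fun θ => prob (fun j => f j θ) F A) (Ioo 0 1) := fun θ hθ =>
    (hasDerivAt_expectation (fun j hj => hf j hj θ hθ) _).continuousAt.continuousWithinAt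
  refine IntegrableOn.of_bound measure_Ioo_lt_top (hcont.aestronglyMeasurable measurableSet_Ioo) 1
    ((ae_restrict_iff' measurableSet_Ioo).2 (ae_of_all _ fun θ hθ => ?_))
  rw [Real.norm_of_nonneg (prob_nonneg (fun j hj => hf01 j hj θ hθ) A)]
  exact prob_le_one (fun j hj => hf01 j hj θ hθ) A

lemma setIntegral_tails_le {g : ℝ → ℝ} {δ C : ℝ} (hδ : 0 < δ)
    (hg : ∀ θ ∈ Ioo 0 δ ∪ Ioo (1 - δ) 1, |g θ| ≤ C) :
    ∫ θ in Ioo 0 δ ∪ Ioo (1 - δ) 1, g θ ≤ 2 * δ * C := by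
  have hC : 0 ≤ C := (abs_nonneg _).trans (hg (δ / 2) (Or.inl ⟨by positivity, by linarith⟩))
  have hvol : volume.real (Ioo 0 δ ∪ Ioo (1 - δ) 1) ≤ 2 * δ := by
    refine (measureReal_union_le _ _).trans ?_
    simp only [Real.volume_real_Ioo, sub_sub_cancel, sub_zero, max_eq_left hδ.le]
    linarith
  calc ∫ θ in Ioo 0 δ ∪ Ioo (1 - δ) 1, g θ ≤ ‖∫ θ in Ioo 0 δ ∪ Ioo (1 - δ) 1, g θ‖ :=
        Real.le_norm_self _
    _ ≤ C * volume.real (Ioo 0 δ ∪ Ioo (1 - δ) 1) :=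
        norm_setIntegral_le_of_norm_le_const
          (measure_union_lt_top measure_Ioo_lt_top measure_Ioo_lt_top) hg
    _ ≤ 2 * δ * C := by nlinarith

theorem setIntegral_tails_prob_card_eq_le
    (hf01 : ∀ j ∈ F, ∀ θ ∈ Ioo (0 : ℝ) 1, f j θ ∈ Icc (0 : ℝ) 1)
    {q : ℕ → ℝ} {k : ℕ} (hq : ∑ j ∈ F, q j = k) {c δ : ℝ} (hc : 0 < c) (hδ : 0 < δ)
    (hδ1 : δ ≤ 1) (hlow : ∀ j ∈ F, ∀ θ ∈ Ioo 0 δ, f j θ + c ≤ q j)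
    (hhigh : ∀ j ∈ F, ∀ θ ∈ Ioo (1 - δ) 1, q j + c ≤ f j θ) :
    ∫ θ in Ioo 0 δ ∪ Ioo (1 - δ) 1, prob (fun j => f j θ) F (fun S => S.card = k) ≤
      2 * δ * Real.exp (-(c ^ 2 / 4 * F.card)) := by
  refine setIntegral_tails_le hδ fun θ hθ => ?_
  have hθ01 : θ ∈ Ioo (0 : ℝ) 1 := by
    rcases hθ with hθ | hθ
    · exact ⟨hθ.1, hθ.2.trans_le hδ1⟩
    · exact ⟨by linarith [hθ.1], hθ.2⟩
  have hp := fun j hj => hf01 j hj θ hθ01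
  rw [abs_of_nonneg (prob_nonneg hp _)]
  rcases hθ with hθ | hθ
  · refine (prob_mono hp fun S _ h => h.ge).trans (prob_card_ge_le_exp_of_sum_add_le hp hc ?_)
    exact (sum_add_card_mul_le fun j hj => hlow j hj θ hθ).trans_eq hq
  · refine (prob_mono hp fun S _ h => h.le).trans (prob_card_le_le_exp_of_add_le_sum hp hc ?_)
    exact hq ▸ sum_add_card_mul_le fun j hj => hhigh j hj θ hθ

/-- By Russo's formula and `mul_prob_erase_le`, on `[a, b]` the derivative of `θ ↦ P(S > k)` is
at most `#F M / c` times `P(S = k)`. -/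
theorem mul_sub_le_integral_prob_card_eq
    (hf01 : ∀ j ∈ F, ∀ θ ∈ Ioo (0 : ℝ) 1, f j θ ∈ Icc (0 : ℝ) 1)
    (hf : ∀ j ∈ F, ∀ θ ∈ Ioo (0 : ℝ) 1, HasDerivAt (f j) (f' j θ) θ) {a b c M : ℝ}
    (ha : 0 < a) (hab : a ≤ b) (hb : b < 1) (hc : 0 < c) (hM : 0 ≤ M)
    (hbound : ∀ j ∈ F, ∀ θ ∈ Icc a b, f' j θ ≤ M ∧ c ≤ 1 - f j θ) (k : ℕ) :
    c * (prob (fun j => f j b) F (fun S => k < S.card) -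
        prob (fun j => f j a) F (fun S => k < S.card)) ≤
      F.card * M * ∫ θ in Ioo 0 1, prob (fun j => f j θ) F (fun S => S.card = k) := by
  set Q := fun θ => prob (fun j => f j θ) F fun S => S.card = k
  have hsub : Icc a b ⊆ Ioo 0 1 := Icc_subset_Ioo ha hb
  have hQ : IntegrableOn Q (Ioo 0 1) := integrableOn_prob hf01 hf _
  have hderiv : ∀ θ ∈ Icc a b, HasDerivAt (fun y => prob (fun j => f j y) F fun S => k < S.card)
      (∑ j ∈ F, f' j θ * prob (fun j => f j θ) (F.erase j) fun S => S.card = k) θ :=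
    fun θ hθ => hasDerivAt_prob_lt_card (fun j hj => hf j hj θ (hsub hθ)) k
  have hrise := intervalIntegral.sub_le_integral_of_hasDeriv_right_of_le hab
    (fun θ hθ => (hderiv θ hθ).continuousAt.continuousWithinAt)
    (fun θ hθ => (hderiv θ (Ioo_subset_Icc_self hθ)).hasDerivWithinAt)
    ((hQ.mono_set hsub).const_mul (F.card * M / c)) fun θ hθ =>
      sum_mul_prob_erase_le (fun j hj => hf01 j hj θ (hsub (Ioo_subset_Icc_self hθ))) hc hM
        (fun j hj => hbound j hj θ (Ioo_subset_Icc_self hθ)) _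
  have hmass : ∫ θ in a..b, Q θ ≤ ∫ θ in Ioo 0 1, Q θ := by
    rw [intervalIntegral.integral_of_le hab]
    refine setIntegral_mono_set hQ ((ae_restrict_iff' measurableSet_Ioo).2 (ae_of_all _ ?_))
      (Eventually.of_forall fun θ (hθ : θ ∈ Ioc a b) => ⟨ha.trans hθ.1, hθ.2.trans_lt hb⟩)
    exact fun θ hθ => prob_nonneg (fun j hj => hf01 j hj θ hθ) _
  rw [intervalIntegral.integral_const_mul] at hrise
  calc _ ≤ c * (F.card * M / c * ∫ θ in a..b, Q θ) := mul_le_mul_of_nonneg_left hrise hc.le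
    _ = F.card * M * ∫ θ in a..b, Q θ := by field_simp
    _ ≤ _ := mul_le_mul_of_nonneg_left hmass (by positivity)

theorem le_integral_prob_card_eq (hf01 : ∀ j ∈ F, ∀ θ ∈ Ioo (0 : ℝ) 1, f j θ ∈ Icc (0 : ℝ) 1)
    (hf : ∀ j ∈ F, ∀ θ ∈ Ioo (0 : ℝ) 1, HasDerivAt (f j) (f' j θ) θ) {a b c M : ℝ}
    (ha : 0 < a) (hab : a ≤ b) (hb : b < 1) (hc : 0 < c) (hM : 0 ≤ M)
    (hbound : ∀ j ∈ F, ∀ θ ∈ Icc a b, f' j θ ≤ M ∧ c ≤ 1 - f j θ) {q : ℕ → ℝ} {k : ℕ}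
    (hq : ∑ j ∈ F, q j = k) (hqa : ∀ j ∈ F, f j a + c ≤ q j) (hqb : ∀ j ∈ F, q j + c ≤ f j b)
    (hsmall : Real.exp (-(c ^ 2 / 4 * F.card)) ≤ 1 / 4) :
    c ≤ 2 * (F.card * M * ∫ θ in Ioo 0 1, prob (fun j => f j θ) F (fun S => S.card = k)) := by
  have hpa := fun j hj => hf01 j hj a ⟨ha, hab.trans_lt hb⟩
  have hpb := fun j hj => hf01 j hj b ⟨ha.trans_le hab, hb⟩
  have htail_a : prob (fun j => f j a) F (fun S => k < S.card) ≤ 1 / 4 := by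
    refine (prob_card_ge_le_exp_of_sum_add_le hpa hc ?_).trans hsmall
    push_cast
    linarith [(sum_add_card_mul_le hqa).trans_eq hq]
  have htail_b : 3 / 4 ≤ prob (fun j => f j b) F (fun S => k < S.card) := by
    have hlow := prob_card_le_le_exp_of_add_le_sum hpb hc (hq ▸ sum_add_card_mul_le hqb)
    have hnot := prob_mono hpb fun S _ (h : ¬ k < S.card) => not_lt.1 h
    linarith [prob_add_prob_not (p := fun j => f j b) (F := F) fun S => k < S.card]
  nlinarith [mul_sub_le_integral_prob_card_eq hf01 hf ha hab hb hc hM hbound k]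

theorem setIntegral_tails_div_integral_prob_card_eq_le
    (hf01 : ∀ j ∈ F, ∀ θ ∈ Ioo (0 : ℝ) 1, f j θ ∈ Icc (0 : ℝ) 1)
    (hf : ∀ j ∈ F, ∀ θ ∈ Ioo (0 : ℝ) 1, HasDerivAt (f j) (f' j θ) θ) {a b c M δ : ℝ}
    (ha : 0 < a) (hab : a ≤ b) (hb : b < 1) (hc : 0 < c) (hM : 0 ≤ M) (hδ : 0 < δ) (hδ1 : δ ≤ 1)
    (hbound : ∀ j ∈ F, ∀ θ ∈ Icc a b, f' j θ ≤ M ∧ c ≤ 1 - f j θ) {q : ℕ → ℝ} {k : ℕ}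
    (hq : ∑ j ∈ F, q j = k) (hqa : ∀ j ∈ F, f j a + c ≤ q j) (hqb : ∀ j ∈ F, q j + c ≤ f j b)
    (hlow : ∀ j ∈ F, ∀ θ ∈ Ioo 0 δ, f j θ + c ≤ q j)
    (hhigh : ∀ j ∈ F, ∀ θ ∈ Ioo (1 - δ) 1, q j + c ≤ f j θ)
    (hsmall : Real.exp (-(c ^ 2 / 4 * F.card)) ≤ 1 / 4) :
    (∫ θ in Ioo 0 δ ∪ Ioo (1 - δ) 1, prob (fun j => f j θ) F (fun S => S.card = k)) /
        (∫ θ in Ioo 0 1, prob (fun j => f j θ) F (fun S => S.card = k)) ≤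
      4 * F.card * M * δ * Real.exp (-(c ^ 2 / 4 * F.card)) / c := by
  have hnum := setIntegral_tails_prob_card_eq_le hf01 hq hc hδ hδ1 hlow hhigh
  have hden := le_integral_prob_card_eq hf01 hf ha hab hb hc hM hbound hq hqa hqb hsmall
  have hmass : 0 < ∫ θ in Ioo 0 1, prob (fun j => f j θ) F (fun S => S.card = k) := by
    by_contra! h
    nlinarith [mul_nonneg (Nat.cast_nonneg (α := ℝ) F.card) hM]
  rw [div_le_div_iff₀ hmass hc]
  nlinarith [mul_le_mul_of_nonneg_right hnum hc.le, mul_le_mul_of_nonneg_left hden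
    (by positivity : (0 : ℝ) ≤ 2 * δ * Real.exp (-(c ^ 2 / 4 * F.card)))]

end Row

lemma mul_sub_le_image_sub_of_le_hasDerivAt {g g' : ℝ → ℝ} {x y m : ℝ} (hxy : x ≤ y)
    (hg : ∀ θ ∈ Icc x y, HasDerivAt g (g' θ) θ) (hm : ∀ θ ∈ Icc x y, m ≤ g' θ) :
    m * (y - x) ≤ g y - g x :=
  (convex_Icc x y).mul_sub_le_image_sub_of_le_deriv
    (fun θ hθ => (hg θ hθ).continuousAt.continuousWithinAt)
    (fun θ hθ => (hg θ (interior_subset hθ)).differentiableAt.differentiableWithinAt)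
    (fun θ hθ => (hg θ (interior_subset hθ)).deriv ▸ hm θ (interior_subset hθ))
    x (left_mem_Icc.2 hxy) y (right_mem_Icc.2 hxy) hxy

lemma eventually_two_le_and_exp_le {r : ℝ} (hr : 0 < r) :
    ∀ᶠ n : ℕ in atTop, 2 ≤ n ∧ Real.exp (-(r * ((n : ℝ) - 1))) ≤ 1 / 4 := by
  have hlim : Tendsto (fun n : ℕ => Real.exp (-(r * ((n : ℝ) - 1)))) atTop (𝓝 0) :=
    Real.tendsto_exp_neg_atTop_nhds_zero.comp
      (((tendsto_natCast_atTop_atTop).atTop_add tendsto_const_nhds).const_mul_atTop hr)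
  exact (eventually_ge_atTop 2).and (hlim.eventually (ge_mem_nhds (by norm_num)))

section IRF

variable {P P' : ℕ → ℕ → ℝ → ℝ} {κ γ : ℕ → ℕ → ℝ}

lemma CondT.mem_Icc (hT : CondT P κ γ) {n j : ℕ} (hj1 : 1 ≤ j) (hjn : j ≤ n) {θ : ℝ}
    (hθ : θ ∈ Ioo (0 : ℝ) 1) : P n j θ ∈ Icc (0 : ℝ) 1 :=
  have ⟨hκ, _, hγ, hP⟩ := hT.1 n j hj1 hjn
  ⟨hκ.trans (hP θ hθ).1, (hP θ hθ).2.trans hγ⟩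

/-- On `[α - 3d, β + 3d]` every IRF rises at rate at least `m` by (D); `c = m d`, and `δ₀` comes
from (T) with `ε = c`. -/
theorem exists_uniform_separation (hD : CondD P P') (hT : CondT P κ γ) {α β : ℝ}
    (hα : 0 < α) (hαβ : α < β) (hβ : β < 1) :
    ∃ a b c M δ₀ : ℝ, 0 < a ∧ a ≤ b ∧ b < 1 ∧ 0 < c ∧ 0 < M ∧ 0 < δ₀ ∧ δ₀ < 1 ∧
      ∀ n j, 1 ≤ j → j ≤ n → ∀ θk ∈ Ioo α β,
        (∀ θ ∈ Ioo 0 δ₀, P n j θ + c ≤ P n j θk) ∧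
        (∀ θ ∈ Ioo (1 - δ₀) 1, P n j θk + c ≤ P n j θ) ∧
        P n j a + c ≤ P n j θk ∧ P n j θk + c ≤ P n j b ∧
        ∀ θ ∈ Icc a b, P' n j θ ≤ M ∧ c ≤ 1 - P n j θ := by
  set d := min α (1 - β) / 4 with hd_def
  have hd : 0 < d := by positivity
  have hdα : d ≤ α / 4 := by linarith [min_le_left α (1 - β)]
  have hdβ : d ≤ (1 - β) / 4 := by linarith [min_le_right α (1 - β)]
  obtain ⟨m, M, hm, hmM, hslope⟩ :=
    hD.2 (α - 3 * d) (β + 3 * d) (by linarith) (by linarith) (by linarith)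
  have hc : 0 < m * d := mul_pos hm hd
  have rise : ∀ n j, 1 ≤ j → j ≤ n → ∀ x y e : ℝ, α - 3 * d ≤ x → x + e * d ≤ y →
      y ≤ β + 3 * d → 0 ≤ e → P n j x + e * (m * d) ≤ P n j y := by
    intro n j hj1 hjn x y e hx hxy hy he
    have hIcc : ∀ θ ∈ Icc x y, θ ∈ Icc (α - 3 * d) (β + 3 * d) := fun θ hθ =>
      ⟨hx.trans hθ.1, hθ.2.trans hy⟩
    have := mul_sub_le_image_sub_of_le_hasDerivAt (by nlinarith) (fun θ hθ =>
      (hD.1 n j hj1 hjn).1 θ ⟨by linarith [(hIcc θ hθ).1], by linarith [(hIcc θ hθ).2]⟩)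
      fun θ hθ => (hslope n j hj1 hjn θ (hIcc θ hθ)).1.le
    nlinarith [mul_le_mul_of_nonneg_left hxy hm.le]
  obtain ⟨l, u, hl, hu, hlu⟩ := hT.2 (m * d) hc
  refine ⟨α - 2 * d, β + 2 * d, m * d, M, min l (1 - u), by linarith, by linarith, by linarith,
    hc, hm.trans hmM, lt_min hl.1 (by linarith [hu.2]), (min_le_left _ _).trans_lt hl.2,
    fun n j hj1 hjn θk hθk => ⟨fun θ hθ => ?_, fun θ hθ => ?_, ?_, ?_, fun θ hθ => ⟨?_, ?_⟩⟩⟩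
  all_goals obtain ⟨-, -, hγ1, hκγ⟩ := hT.1 n j hj1 hjn
  · have h1 := (hlu n j hj1 hjn).1 θ ⟨hθ.1, hθ.2.le.trans (min_le_left _ _)⟩
    have h2 := (hκγ (α - 3 * d) ⟨by linarith, by linarith⟩).1
    linarith [rise n j hj1 hjn (α - 3 * d) θk 2 le_rfl (by linarith [hθk.1]) (by linarith [hθk.2])
      zero_le_two]
  · have h1 := (hlu n j hj1 hjn).2 θ ⟨by linarith [hθ.1, min_le_right l (1 - u)], hθ.2⟩
    have h2 := (hκγ (β + 3 * d) ⟨by linarith, by linarith⟩).2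
    linarith [rise n j hj1 hjn θk (β + 3 * d) 2 (by linarith [hθk.1]) (by linarith [hθk.2]) le_rfl
      zero_le_two]
  · simpa using rise n j hj1 hjn (α - 2 * d) θk 1 (by linarith) (by linarith [hθk.1])
      (by linarith [hθk.2]) zero_le_one
  · simpa using rise n j hj1 hjn θk (β + 2 * d) 1 (by linarith [hθk.1]) (by linarith [hθk.2])
      (by linarith) zero_le_one
  · exact (hslope n j hj1 hjn θ ⟨by linarith [hθ.1], by linarith [hθ.2]⟩).2.le
  · have h2 := (hκγ (β + 3 * d) ⟨by linarith, by linarith⟩).2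
    linarith [rise n j hj1 hjn θ (β + 3 * d) 1 (by linarith [hθ.1]) (by linarith [hθ.2]) le_rfl
      zero_le_one]

end IRF

open PoissonBinomial

lemma Qfun_eq_prob (P : ℕ → ℕ → ℝ → ℝ) (n i k : ℕ) (θ : ℝ) :
    Qfun P n i k θ = prob (fun j => P n j θ) ((Finset.Icc 1 n).erase i) fun S => S.card = k := by
  simp only [Qfun, prob, expectation, weight, powersetCard_eq_filter, sum_filter, ite_mul, one_mul,
    zero_mul]

theorem conditional_tail_prob_bound_general
    (P P' : ℕ → ℕ → ℝ → ℝ) (κ γ : ℕ → ℕ → ℝ)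
    (hD : CondD P P') (hT : CondT P κ γ)
    (α β : ℝ) (hα : 0 < α) (hαβ : α < β) (hβ : β < 1) :
    ∃ C₁ C₂ δ₀ : ℝ, 0 < C₁ ∧ 0 < C₂ ∧ 0 < δ₀ ∧
      ∀ δ : ℝ, δ ∈ Set.Ioo 0 δ₀ →
        ∃ N : ℕ, ∀ n i : ℕ, N ≤ n → 1 ≤ i → i ≤ n →
          ∀ k : ℕ,
            (∃ θk ∈ Set.Ioo α β,
                ∑ j ∈ (Finset.Icc 1 n).erase i, P n j θk = (k : ℝ)) →
            (∫ θ in Set.Ioo (0 : ℝ) δ ∪ Set.Ioo (1 - δ) 1, Qfun P n i k θ) /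
                (∫ θ in Set.Ioo (0 : ℝ) 1, Qfun P n i k θ) ≤
              n * δ * Real.exp (-(n * C₁)) / C₂ := by
  obtain ⟨a, b, c, M, δ₀, ha, hab, hb, hc, hM, hδ₀, hδ₀1, hsep⟩ :=
    exists_uniform_separation hD hT hα hαβ hβ
  refine ⟨c ^ 2 / 8, c / (4 * M), δ₀, by positivity, by positivity, hδ₀, fun δ ⟨hδ, hδδ₀⟩ => ?_⟩
  obtain ⟨N, hN⟩ :=
    eventually_atTop.1 (eventually_two_le_and_exp_le (r := c ^ 2 / 4) (by positivity))
  refine ⟨N, fun n i hn hi hin k ⟨θk, hθk, hk⟩ => ?_⟩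
  set F := (Finset.Icc 1 n).erase i with hF_def
  have hF : ∀ j ∈ F, 1 ≤ j ∧ j ≤ n := fun j hj => mem_Icc.1 (mem_of_mem_erase hj)
  have hcard : (F.card : ℝ) = n - 1 := by
    rw [card_erase_of_mem (mem_Icc.2 ⟨hi, hin⟩), Nat.card_Icc, Nat.cast_sub (by omega)]
    simp
  have hsepF := fun j hj => hsep n j (hF j hj).1 (hF j hj).2 θk hθk
  have hratio := setIntegral_tails_div_integral_prob_card_eq_le
    (fun j hj θ hθ => hT.mem_Icc (hF j hj).1 (hF j hj).2 hθ)
    (fun j hj => (hD.1 n j (hF j hj).1 (hF j hj).2).1) ha hab hb hc hM.le hδ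
    (hδδ₀.trans hδ₀1).le (fun j hj => (hsepF j hj).2.2.2.2) hk (fun j hj => (hsepF j hj).2.2.1)
    (fun j hj => (hsepF j hj).2.2.2.1)
    (fun j hj θ hθ => (hsepF j hj).1 θ ⟨hθ.1, hθ.2.trans hδδ₀⟩)
    (fun j hj θ hθ => (hsepF j hj).2.1 θ ⟨by linarith [hθ.1], hθ.2⟩) (hcard ▸ (hN n hn).2)
  have hn2 : (2 : ℝ) ≤ n := by exact_mod_cast (hN n hn).1
  simp only [Qfun_eq_prob, ← hF_def]
  refine hratio.trans ?_
  calc _ ≤ 4 * n * M * δ * Real.exp (-(n * (c ^ 2 / 8))) / c := by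
        rw [hcard]
        gcongr 4 * ?_ * M * δ * Real.exp ?_ / c
        · linarith
        · nlinarith [sq_nonneg c]
    _ = _ := by field_simp

/-- Lemma 2: under Conditions (D) and (T), for fixed `0 < α < β < 1` there exist constants
`C̃₁, C̃₂ > 0` (independent of `(n,i)`) and `δ₀ > 0` such that for every `δ ∈ (0, δ₀)` and
all sufficiently large `n`, all `1 ≤ i ≤ n`, and every integer `k` admitting
`θ_k ∈ (α,β)` with `∑_{j ≠ i} P_{n,j}(θ_k) = k`, the conditional probability that the
uniform latent trait lies outside `(δ, 1−δ)` given exactly `k` successes among the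
responses other than item `i` is at most `n·δ·exp(−n·C̃₁)/C̃₂`. -/
theorem conditional_tail_prob_bound
    (P P' : ℕ → ℕ → ℝ → ℝ) (κ γ : ℕ → ℕ → ℝ)
    (hP : TriIRF P) (hD : CondD P P') (hT : CondT P κ γ)
    (α β : ℝ) (hα : 0 < α) (hαβ : α < β) (hβ : β < 1) :
    ∃ C₁ C₂ δ₀ : ℝ, 0 < C₁ ∧ 0 < C₂ ∧ 0 < δ₀ ∧
      ∀ δ : ℝ, δ ∈ Set.Ioo 0 δ₀ →
        ∃ N : ℕ, ∀ n i : ℕ, N ≤ n → 1 ≤ i → i ≤ n →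
          ∀ k : ℕ,
            (∃ θk ∈ Set.Ioo α β,
                ∑ j ∈ (Finset.Icc 1 n).erase i, P n j θk = (k : ℝ)) →
            (∫ θ in Set.Ioo (0 : ℝ) δ ∪ Set.Ioo (1 - δ) 1, Qfun P n i k θ) /
                (∫ θ in Set.Ioo (0 : ℝ) 1, Qfun P n i k θ) ≤
              n * δ * Real.exp (-(n * C₁)) / C₂ :=
  conditional_tail_prob_bound_general P P' κ γ hD hT α β hα hαβ hβ
end

section
/- Let a, b be real parameters with a² > 1. Then for the transformed normal-ogive item response function P_{a,b}, one has lim_{θ↓0} P'_{a,b}(θ) = 0 and lim_{θ↑1} P'_{a,b}(θ) = 0. -/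
open Set Filter Topology MeasureTheory

/-- The standard normal density `φ(x) = (2π)^{-1/2} exp(-x²/2)`. -/
noncomputable def stdNormalPDF (x : ℝ) : ℝ :=
  (Real.sqrt (2 * Real.pi))⁻¹ * Real.exp (-(x ^ 2) / 2)

/-- The standard normal CDF `Φ(x) = ∫_{-∞}^x φ`. -/
noncomputable def stdNormalCDF (x : ℝ) : ℝ :=
  ∫ t in Set.Iic x, stdNormalPDF t

/-- The inverse `Φ⁻¹ : (0,1) → ℝ` of the standard normal CDF. -/
noncomputable def stdNormalCDFInv : ℝ → ℝ :=
  Function.invFun stdNormalCDF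

/-- The transformed normal-ogive item response function
`P_{a,b}(θ) = Φ(a(Φ⁻¹(θ) − b))`. -/
noncomputable def ogiveIRF (a b θ : ℝ) : ℝ :=
  stdNormalCDF (a * (stdNormalCDFInv θ - b))

/-- The derivative of the transformed normal-ogive item response function,
`P'_{a,b}(θ) = a·φ(a(Φ⁻¹(θ) − b))/φ(Φ⁻¹(θ))`. -/
noncomputable def ogiveIRFDeriv (a b θ : ℝ) : ℝ :=
  a * stdNormalPDF (a * (stdNormalCDFInv θ - b)) / stdNormalPDF (stdNormalCDFInv θ)
/-! As `θ ↓ 0` or `θ ↑ 1`, `x = Φ⁻¹(θ)` tends to `∓∞`, and completing the square gives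
`a φ(a(x - b)) / φ(x) = a exp(a²b²/(2c) - c(x - a²b/c)²/2)` with `c = a² - 1 > 0`,
which tends to `0` as `|x| → ∞`. -/

open ProbabilityTheory Function

section InverseOfStrictMono

variable {F : ℝ → ℝ} {l u y : ℝ}

lemma Continuous.apply_invFun_of_mem_Ioo (hc : Continuous F) (hl : Tendsto F atBot (𝓝 l))
    (hu : Tendsto F atTop (𝓝 u)) (hy : y ∈ Ioo l u) : F (invFun F y) = y :=
  invFun_eq <| mem_range_of_exists_le_of_exists_ge hc
    (hl.eventually (eventually_le_nhds hy.1)).exists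
    (hu.eventually (eventually_ge_nhds hy.2)).exists

lemma StrictMono.mem_Ioo_of_tendsto (hF : StrictMono F) (hl : Tendsto F atBot (𝓝 l))
    (hu : Tendsto F atTop (𝓝 u)) (x : ℝ) : F x ∈ Ioo l u :=
  ⟨(hF.monotone.le_of_tendsto hl (x - 1)).trans_lt (hF (sub_one_lt x)),
    (hF (lt_add_one x)).trans_le (hF.monotone.ge_of_tendsto hu (x + 1))⟩

lemma StrictMono.tendsto_invFun_nhdsGT_atBot (hF : StrictMono F) (hc : Continuous F)
    (hl : Tendsto F atBot (𝓝 l)) (hu : Tendsto F atTop (𝓝 u)) :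
    Tendsto (invFun F) (𝓝[>] l) atBot := by
  refine Filter.tendsto_atBot.2 fun M => ?_
  obtain ⟨hlM, hMu⟩ := hF.mem_Ioo_of_tendsto hl hu M
  filter_upwards [Ioo_mem_nhdsGT hlM] with y hy
  have hFy := hc.apply_invFun_of_mem_Ioo hl hu ⟨hy.1, hy.2.trans hMu⟩
  exact (hF.lt_iff_lt.1 (hFy.trans_lt hy.2)).le

lemma StrictMono.tendsto_invFun_nhdsLT_atTop (hF : StrictMono F) (hc : Continuous F)
    (hl : Tendsto F atBot (𝓝 l)) (hu : Tendsto F atTop (𝓝 u)) :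
    Tendsto (invFun F) (𝓝[<] u) atTop := by
  refine Filter.tendsto_atTop.2 fun M => ?_
  obtain ⟨hlM, hMu⟩ := hF.mem_Ioo_of_tendsto hl hu M
  filter_upwards [Ioo_mem_nhdsLT hMu] with y hy
  have hFy := hc.apply_invFun_of_mem_Ioo hl hu ⟨hlM.trans hy.1, hy.2⟩
  exact (hF.lt_iff_lt.1 (hy.1.trans_eq hFy.symm)).le

end InverseOfStrictMono

lemma stdNormalPDF_eq_gaussianPDFReal : stdNormalPDF = gaussianPDFReal 0 1 := by
  ext x
  simp [stdNormalPDF, gaussianPDFReal]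

lemma integrable_stdNormalPDF : Integrable stdNormalPDF :=
  stdNormalPDF_eq_gaussianPDFReal ▸ integrable_gaussianPDFReal 0 1

lemma stdNormalCDF_eq_cdf_gaussianReal : stdNormalCDF = cdf (gaussianReal 0 1) := by
  ext x
  rw [cdf_eq_real, measureReal_def, gaussianReal_apply_eq_integral _ one_ne_zero,
    ENNReal.toReal_ofReal (setIntegral_nonneg measurableSet_Iic fun t _ =>
      gaussianPDFReal_nonneg 0 1 t),
    stdNormalCDF, stdNormalPDF_eq_gaussianPDFReal]

lemma continuous_stdNormalCDF : Continuous stdNormalCDF :=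
  continuous_iff_continuousAt.2 fun x =>
    integrable_stdNormalPDF.integrableOn.continuousOn_Iic_primitive_Iic.continuousAt
      (Iic_mem_nhds (lt_add_one x))

lemma strictMono_stdNormalCDF : StrictMono stdNormalCDF := by
  intro x y hxy
  have hdiff : stdNormalCDF y - stdNormalCDF x = ∫ t in x..y, stdNormalPDF t :=
    intervalIntegral.integral_Iic_sub_Iic integrable_stdNormalPDF.integrableOn
      integrable_stdNormalPDF.integrableOn
  have hpos : 0 < ∫ t in x..y, stdNormalPDF t :=
    intervalIntegral.intervalIntegral_pos_of_pos integrable_stdNormalPDF.intervalIntegrable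
      (fun t => stdNormalPDF_eq_gaussianPDFReal ▸ gaussianPDFReal_pos 0 1 t one_ne_zero) hxy
  linarith

lemma tendsto_stdNormalCDFInv_nhdsGT_zero : Tendsto stdNormalCDFInv (𝓝[>] 0) atBot :=
  strictMono_stdNormalCDF.tendsto_invFun_nhdsGT_atBot continuous_stdNormalCDF
    (stdNormalCDF_eq_cdf_gaussianReal ▸ tendsto_cdf_atBot _)
    (stdNormalCDF_eq_cdf_gaussianReal ▸ tendsto_cdf_atTop _)

lemma tendsto_stdNormalCDFInv_nhdsLT_one : Tendsto stdNormalCDFInv (𝓝[<] 1) atTop :=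
  strictMono_stdNormalCDF.tendsto_invFun_nhdsLT_atTop continuous_stdNormalCDF
    (stdNormalCDF_eq_cdf_gaussianReal ▸ tendsto_cdf_atBot _)
    (stdNormalCDF_eq_cdf_gaussianReal ▸ tendsto_cdf_atTop _)

lemma stdNormalPDF_div_stdNormalPDF (u v : ℝ) :
    stdNormalPDF u / stdNormalPDF v = Real.exp ((v ^ 2 - u ^ 2) / 2) := by
  rw [stdNormalPDF, stdNormalPDF, mul_div_mul_left _ _ (by positivity), ← Real.exp_sub]
  ring_nf

lemma tendsto_sub_const_sq_cocompact (d : ℝ) :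
    Tendsto (fun x : ℝ => (x - d) ^ 2) (cocompact ℝ) atTop := by
  have := (tendsto_pow_atTop two_ne_zero).comp (tendsto_norm_cocompact_atTop.comp
    (Homeomorph.subRight d).isClosedEmbedding.tendsto_cocompact)
  simpa [Function.comp_def, Real.norm_eq_abs, sq_abs] using this

lemma tendsto_mul_stdNormalPDF_div_stdNormalPDF_cocompact {a : ℝ} (b : ℝ) (ha : 1 < a ^ 2) :
    Tendsto (fun x => a * stdNormalPDF (a * (x - b)) / stdNormalPDF x) (cocompact ℝ) (𝓝 0) := by
  set c := a ^ 2 - 1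
  have hc : 0 < c := sub_pos.2 ha
  have hsq (x : ℝ) : a * stdNormalPDF (a * (x - b)) / stdNormalPDF x =
      a * Real.exp (a ^ 2 * b ^ 2 / (2 * c) - c / 2 * (x - a ^ 2 * b / c) ^ 2) := by
    rw [mul_div_assoc, stdNormalPDF_div_stdNormalPDF]
    congr 2
    field_simp
    ring
  have hexp : Tendsto (fun x => a ^ 2 * b ^ 2 / (2 * c) - c / 2 * (x - a ^ 2 * b / c) ^ 2)
      (cocompact ℝ) atBot :=
    tendsto_atBot_add_const_left _ _ <| tendsto_neg_atTop_atBot.comp <|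
      (tendsto_sub_const_sq_cocompact _).const_mul_atTop (half_pos hc)
  simpa [hsq] using (Real.tendsto_exp_atBot.comp hexp).const_mul a

/-- If `a² > 1`, then `P'_{a,b}(θ) → 0` as `θ ↓ 0` and as `θ ↑ 1`. -/
theorem ogive_deriv_boundary_limits_steep (a b : ℝ) (h1 : 1 < a ^ 2) :
    Tendsto (ogiveIRFDeriv a b) (𝓝[>] (0 : ℝ)) (𝓝 0) ∧
    Tendsto (ogiveIRFDeriv a b) (𝓝[<] (1 : ℝ)) (𝓝 0) := by
  have hratio := tendsto_mul_stdNormalPDF_div_stdNormalPDF_cocompact b h1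
  exact ⟨(hratio.mono_left atBot_le_cocompact).comp tendsto_stdNormalCDFInv_nhdsGT_zero,
    (hratio.mono_left atTop_le_cocompact).comp tendsto_stdNormalCDFInv_nhdsLT_one⟩
end
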